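/- Let N ≥ 1, let t_0 < t_1 < ⋯ < t_N be real numbers with T_max = max_{0 ≤ n ≤ N−1} (t_{n+1} − t_n), let Ω₀ > 0, and let f : ℝ → ℝ be continuously differentiable on [t_0, t_N] and satisfy the Bernstein-type bound ∫_{t_0}^{t_N} f′(t)² dt ≤ Ω₀² ∫_{t_0}^{t_N} f(t)² dt. For each n let s_n = (t_n + t_{n+1})/2. Then Σ_{n=0}^{N−1} ∫_{t_n}^{t_{n+1}} (f(t) − f(s_n))² dt ≤ (T_max Ω₀/π)² · ∫_{t_0}^{t_N} f(t)² dt; in particular, if T_max < π/Ω₀ then the contraction factor (T_max Ω₀/π)² is strictly less than 1. -/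
import Mathlib


open MeasureTheory intervalIntegral Real

open Set

set_option maxHeartbeats 1000000

lemma wirtinger_core (a c e μ : ℝ) (hac : a ≤ c) (hμ : 0 < μ)
    (g g' : ℝ → ℝ)
    (hg : ∀ x ∈ Icc a c, HasDerivAt g (g' x) x)
    (hg' : ContinuousOn g' (Icc a c))
    (hmem : ∀ x ∈ Icc a c, μ * (x - e) ∈ Ioo (-(π/2)) (π/2))
    (hbc : g c ^ 2 * Real.tan (μ * (c - e)) ≤ g a ^ 2 * Real.tan (μ * (a - e))) :
    μ ^ 2 * ∫ x in a..c, g x ^ 2 ≤ ∫ x in a..c, g' x ^ 2 := by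
  have huIcc : uIcc a c = Icc a c := uIcc_of_le hac
  have hlin : Continuous fun x : ℝ => μ * (x - e) :=
    continuous_const.mul (continuous_id.sub continuous_const)
  have hcos : ∀ x ∈ Icc a c, 0 < Real.cos (μ * (x - e)) := fun x hx =>
    Real.cos_pos_of_mem_Ioo (by simpa using hmem x hx)
  -- continuity of g
  have hgc : ContinuousOn g (Icc a c) := fun x hx =>
    (hg x hx).continuousAt.continuousWithinAt
  -- continuity of T
  have hTc : ContinuousOn (fun x => Real.tan (μ * (x - e))) (Icc a c) := by
    intro x hx
    have h1 : ContinuousAt Real.tan (μ * (x - e)) :=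
      Real.continuousAt_tan.mpr (hcos x hx).ne'
    have h2 : ContinuousAt (fun y : ℝ => μ * (y - e)) x := hlin.continuousAt
    exact (ContinuousAt.comp (g := Real.tan) (f := fun y : ℝ => μ * (y - e)) h1 h2).continuousWithinAt
  -- derivative of T
  have hTd : ∀ x ∈ Icc a c, HasDerivAt (fun x => Real.tan (μ * (x - e)))
      ((1 / Real.cos (μ * (x - e)) ^ 2) * μ) x := by
    intro x hx
    have h1 : HasDerivAt Real.tan (1 / Real.cos (μ * (x - e)) ^ 2) (μ * (x - e)) :=
      Real.hasDerivAt_tan (hcos x hx).ne'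
    have h2 : HasDerivAt (fun x : ℝ => μ * (x - e)) μ x := by
      simpa using ((hasDerivAt_id x).sub_const e).const_mul μ
    exact h1.comp x h2
  -- auxiliary function and its derivative
  have hhd : ∀ x ∈ Icc a c, HasDerivAt
      (fun x => -μ * (g x ^ 2 * Real.tan (μ * (x - e))))
      (-μ * ((2 * g x ^ 1 * g' x) * Real.tan (μ * (x - e))
        + g x ^ 2 * ((1 / Real.cos (μ * (x - e)) ^ 2) * μ))) x := by
    intro x hx
    exact (((hg x hx).pow 2).mul (hTd x hx)).const_mul (-μ)
  have hh'c : ContinuousOn (fun x =>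
      -μ * ((2 * g x ^ 1 * g' x) * Real.tan (μ * (x - e))
        + g x ^ 2 * ((1 / Real.cos (μ * (x - e)) ^ 2) * μ))) (Icc a c) := by
    apply ContinuousOn.mul continuousOn_const
    apply ContinuousOn.add
    · exact ((continuousOn_const.mul (hgc.pow 1)).mul hg').mul hTc
    · apply ContinuousOn.mul (hgc.pow 2)
      apply ContinuousOn.mul _ continuousOn_const
      apply ContinuousOn.div continuousOn_const
      · exact ((Real.continuous_cos.comp hlin).continuousOn).pow 2
      · intro x hx; exact pow_ne_zero 2 (hcos x hx).ne'
  -- FTC for the auxiliary function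
  have hFTC : (∫ x in a..c, -μ * ((2 * g x ^ 1 * g' x) * Real.tan (μ * (x - e))
        + g x ^ 2 * ((1 / Real.cos (μ * (x - e)) ^ 2) * μ)))
      = -μ * (g c ^ 2 * Real.tan (μ * (c - e))) - -μ * (g a ^ 2 * Real.tan (μ * (a - e))) := by
    apply intervalIntegral.integral_eq_sub_of_hasDerivAt
    · intro x hx; exact hhd x (huIcc ▸ hx)
    · exact (hh'c.mono (by rw [huIcc])).intervalIntegrable
  -- pointwise identity
  have hident : ∀ x ∈ Icc a c,
      g' x ^ 2 - μ ^ 2 * g x ^ 2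
        = (g' x + μ * g x * Real.tan (μ * (x - e))) ^ 2
          + (-μ * ((2 * g x ^ 1 * g' x) * Real.tan (μ * (x - e))
            + g x ^ 2 * ((1 / Real.cos (μ * (x - e)) ^ 2) * μ))) := by
    intro x hx
    have hc2 : (1 : ℝ) / Real.cos (μ * (x - e)) ^ 2 = 1 + Real.tan (μ * (x - e)) ^ 2 := by
      rw [← Real.inv_one_add_tan_sq (hcos x hx).ne', one_div, inv_inv]
    rw [hc2]; ring
  -- integrability facts
  have hgint : IntervalIntegrable (fun x => g x ^ 2) volume a c :=
    ((hgc.pow 2).mono (by rw [huIcc])).intervalIntegrable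
  have hg'int : IntervalIntegrable (fun x => g' x ^ 2) volume a c :=
    ((hg'.pow 2).mono (by rw [huIcc])).intervalIntegrable
  have hFint : IntervalIntegrable
      (fun x => (g' x + μ * g x * Real.tan (μ * (x - e))) ^ 2) volume a c := by
    apply ContinuousOn.intervalIntegrable
    rw [huIcc]
    exact ((hg'.add ((continuousOn_const.mul hgc).mul hTc)).pow 2)
  have hh'int : IntervalIntegrable (fun x =>
      -μ * ((2 * g x ^ 1 * g' x) * Real.tan (μ * (x - e))
        + g x ^ 2 * ((1 / Real.cos (μ * (x - e)) ^ 2) * μ))) volume a c :=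
    (hh'c.mono (by rw [huIcc])).intervalIntegrable
  -- key computation
  have key : (∫ x in a..c, g' x ^ 2) - μ ^ 2 * ∫ x in a..c, g x ^ 2
      = (∫ x in a..c, (g' x + μ * g x * Real.tan (μ * (x - e))) ^ 2)
        + (-μ * (g c ^ 2 * Real.tan (μ * (c - e))) - -μ * (g a ^ 2 * Real.tan (μ * (a - e)))) := by
    rw [← hFTC, ← intervalIntegral.integral_add hFint hh'int,
      ← intervalIntegral.integral_const_mul, ← intervalIntegral.integral_sub hg'int
      (hgint.const_mul _)]
    apply intervalIntegral.integral_congr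
    intro x hx
    exact hident x (huIcc ▸ hx)
  have hsq : 0 ≤ ∫ x in a..c, (g' x + μ * g x * Real.tan (μ * (x - e))) ^ 2 :=
    intervalIntegral.integral_nonneg hac (fun u _ => sq_nonneg _)
  have hbd : 0 ≤ -μ * (g c ^ 2 * Real.tan (μ * (c - e)))
      - -μ * (g a ^ 2 * Real.tan (μ * (a - e))) := by nlinarith
  linarith

lemma poincare_limit (a c : ℝ) (hac : a < c) (I J : ℝ) (hJ : 0 ≤ J)
    (H : ∀ μ : ℝ, μ ∈ Ioo 0 (π / (2 * (c - a))) → μ ^ 2 * I ≤ J) :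
    I ≤ (2 * (c - a) / π) ^ 2 * J := by
  have hL : 0 < c - a := sub_pos.mpr hac
  have hπ : (0:ℝ) < π := Real.pi_pos
  set ω : ℝ := π / (2 * (c - a)) with hω
  have hω0 : 0 < ω := div_pos hπ (by linarith)
  have hlim : ω ^ 2 * I ≤ J := by
    have htend : Filter.Tendsto (fun μ : ℝ => μ ^ 2 * I) (nhdsWithin ω (Iio ω))
        (nhds (ω ^ 2 * I)) :=
      ((continuous_pow 2).mul continuous_const).continuousAt.continuousWithinAt
    apply le_of_tendsto htend
    filter_upwards [Ioo_mem_nhdsLT_of_mem ⟨hω0, le_refl ω⟩] with μ hμ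
    exact H μ hμ
  have hinv : (2 * (c - a) / π) ^ 2 = (ω ^ 2)⁻¹ := by
    rw [hω]; field_simp
  rw [hinv]
  calc I = (ω ^ 2)⁻¹ * (ω ^ 2 * I) := by field_simp
    _ ≤ (ω ^ 2)⁻¹ * J :=
      mul_le_mul_of_nonneg_left hlim (le_of_lt (inv_pos.mpr (pow_pos hω0 2)))

lemma poincare_left (a c : ℝ) (hac : a < c) (g g' : ℝ → ℝ)
    (hg : ∀ x ∈ Icc a c, HasDerivAt g (g' x) x)
    (hg' : ContinuousOn g' (Icc a c))
    (h0 : g a = 0) :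
    ∫ x in a..c, g x ^ 2 ≤ (2 * (c - a) / π) ^ 2 * ∫ x in a..c, g' x ^ 2 := by
  have hL : 0 < c - a := sub_pos.mpr hac
  have hπ : (0:ℝ) < π := Real.pi_pos
  apply poincare_limit a c hac _ _ (intervalIntegral.integral_nonneg hac.le
    (fun u _ => sq_nonneg _))
  intro μ hμ
  apply wirtinger_core a c c μ hac.le hμ.1 g g' hg hg'
  · intro x hx
    have h1 : μ * (c - a) < π / 2 := by
      have := (lt_div_iff₀ (by linarith : (0:ℝ) < 2 * (c - a))).mp hμ.2
      linarith
    constructor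
    · have : μ * (x - c) ≥ -(μ * (c - a)) := by nlinarith [hx.1, hμ.1]
      linarith
    · have : μ * (x - c) ≤ 0 := by nlinarith [hx.2, hμ.1]
      linarith
  · simp [h0]

lemma poincare_right (a c : ℝ) (hac : a < c) (g g' : ℝ → ℝ)
    (hg : ∀ x ∈ Icc a c, HasDerivAt g (g' x) x)
    (hg' : ContinuousOn g' (Icc a c))
    (h0 : g c = 0) :
    ∫ x in a..c, g x ^ 2 ≤ (2 * (c - a) / π) ^ 2 * ∫ x in a..c, g' x ^ 2 := by
  have hL : 0 < c - a := sub_pos.mpr hac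
  have hπ : (0:ℝ) < π := Real.pi_pos
  apply poincare_limit a c hac _ _ (intervalIntegral.integral_nonneg hac.le
    (fun u _ => sq_nonneg _))
  intro μ hμ
  apply wirtinger_core a c a μ hac.le hμ.1 g g' hg hg'
  · intro x hx
    have h1 : μ * (c - a) < π / 2 := by
      have := (lt_div_iff₀ (by linarith : (0:ℝ) < 2 * (c - a))).mp hμ.2
      linarith
    constructor
    · have : μ * (x - a) ≥ 0 := by nlinarith [hx.1, hμ.1]
      linarith
    · have : μ * (x - a) ≤ μ * (c - a) := by nlinarith [hx.2, hμ.1]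
      linarith
  · simp [h0]

lemma midpoint_wirtinger (u v : ℝ) (huv : u < v) (f f' : ℝ → ℝ)
    (hderiv : ∀ x ∈ Icc u v, HasDerivAt f (f' x) x)
    (hcont : ContinuousOn f' (Icc u v)) :
    ∫ x in u..v, (f x - f ((u + v) / 2)) ^ 2
      ≤ ((v - u) / π) ^ 2 * ∫ x in u..v, f' x ^ 2 := by
  set m : ℝ := (u + v) / 2 with hm
  have hum : u < m := by rw [hm]; linarith
  have hmv : m < v := by rw [hm]; linarith
  set g : ℝ → ℝ := fun x => f x - f m with hgdef
  have hsub1 : Icc u m ⊆ Icc u v := Icc_subset_Icc le_rfl hmv.le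
  have hsub2 : Icc m v ⊆ Icc u v := Icc_subset_Icc hum.le le_rfl
  have hgd1 : ∀ x ∈ Icc u m, HasDerivAt g (f' x) x := fun x hx =>
    (hderiv x (hsub1 hx)).sub_const _
  have hgd2 : ∀ x ∈ Icc m v, HasDerivAt g (f' x) x := fun x hx =>
    (hderiv x (hsub2 hx)).sub_const _
  have hgm : g m = 0 := by simp [hgdef]
  have h1 : ∫ x in u..m, g x ^ 2 ≤ (2 * (m - u) / π) ^ 2 * ∫ x in u..m, f' x ^ 2 :=
    poincare_right u m hum g f' hgd1 (hcont.mono hsub1) hgm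
  have h2 : ∫ x in m..v, g x ^ 2 ≤ (2 * (v - m) / π) ^ 2 * ∫ x in m..v, f' x ^ 2 :=
    poincare_left m v hmv g f' hgd2 (hcont.mono hsub2) hgm
  have hc1 : (2 * (m - u) / π) ^ 2 = ((v - u) / π) ^ 2 := by rw [hm]; ring_nf
  have hc2 : (2 * (v - m) / π) ^ 2 = ((v - u) / π) ^ 2 := by rw [hm]; ring_nf
  -- continuity of f on Icc u v
  have hfc : ContinuousOn f (Icc u v) := fun x hx =>
    (hderiv x hx).continuousAt.continuousWithinAt
  have hgsq : ContinuousOn (fun x => g x ^ 2) (Icc u v) := (hfc.sub continuousOn_const).pow 2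
  have hint1 : IntervalIntegrable (fun x => g x ^ 2) volume u m :=
    ((hgsq.mono hsub1).mono (by rw [uIcc_of_le hum.le])).intervalIntegrable
  have hint2 : IntervalIntegrable (fun x => g x ^ 2) volume m v :=
    ((hgsq.mono hsub2).mono (by rw [uIcc_of_le hmv.le])).intervalIntegrable
  have hint1' : IntervalIntegrable (fun x => f' x ^ 2) volume u m :=
    (((hcont.pow 2).mono hsub1).mono (by rw [uIcc_of_le hum.le])).intervalIntegrable
  have hint2' : IntervalIntegrable (fun x => f' x ^ 2) volume m v :=
    (((hcont.pow 2).mono hsub2).mono (by rw [uIcc_of_le hmv.le])).intervalIntegrable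
  have hsplit : ∫ x in u..v, g x ^ 2 = (∫ x in u..m, g x ^ 2) + ∫ x in m..v, g x ^ 2 :=
    (intervalIntegral.integral_add_adjacent_intervals hint1 hint2).symm
  have hsplit' : ∫ x in u..v, f' x ^ 2 = (∫ x in u..m, f' x ^ 2) + ∫ x in m..v, f' x ^ 2 :=
    (intervalIntegral.integral_add_adjacent_intervals hint1' hint2').symm
  have : ∫ x in u..v, g x ^ 2 ≤ ((v - u) / π) ^ 2 * ∫ x in u..v, f' x ^ 2 := by
    rw [hsplit, hsplit', mul_add]
    exact add_le_add (hc1 ▸ h1) (hc2 ▸ h2)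
  simpa [hgdef] using this

set_option maxHeartbeats 1000000 in
/-- Summed midpoint Wirtinger bound combined with a Bernstein-type hypothesis:
the approximation error is bounded by `(Tmax Ω₀/π)² ∫ f²`, and if
`Tmax < π/Ω₀` the contraction factor is strictly less than `1`. -/
theorem summed_wirtinger_bernstein_bound
    (N : ℕ) (hN : 1 ≤ N) (t : ℕ → ℝ)
    (ht : ∀ n < N, t n < t (n + 1))
    (Tmax : ℝ)
    (hT : Tmax = (Finset.range N).sup' (Finset.nonempty_range_iff.mpr (by omega))
      (fun n => t (n + 1) - t n))
    (Ω₀ : ℝ) (hΩ : 0 < Ω₀)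
    (f f' : ℝ → ℝ)
    (hderiv : ∀ x ∈ Set.Icc (t 0) (t N), HasDerivAt f (f' x) x)
    (hcont : ContinuousOn f' (Set.Icc (t 0) (t N)))
    (hBernstein : ∫ x in (t 0)..(t N), (f' x) ^ 2
      ≤ Ω₀ ^ 2 * ∫ x in (t 0)..(t N), (f x) ^ 2) :
    (∑ n ∈ Finset.range N,
        ∫ x in (t n)..(t (n + 1)), (f x - f ((t n + t (n + 1)) / 2)) ^ 2
      ≤ (Tmax * Ω₀ / π) ^ 2 * ∫ x in (t 0)..(t N), (f x) ^ 2)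
    ∧ (Tmax < π / Ω₀ → (Tmax * Ω₀ / π) ^ 2 < 1) := by
  have hπ : (0:ℝ) < π := Real.pi_pos
  -- monotonicity of t on [0, N]
  have hmono : ∀ i j : ℕ, i ≤ j → j ≤ N → t i ≤ t j := by
    intro i j hij hjN
    induction j with
    | zero => simp_all
    | succ k IH =>
      rcases Nat.eq_or_lt_of_le hij with h | h
      · rw [h]
      · exact le_trans (IH (by omega) (by omega)) (ht k (by omega)).le
  -- per-interval containment
  have hsub : ∀ n < N, Icc (t n) (t (n + 1)) ⊆ Icc (t 0) (t N) := by
    intro n hn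
    exact Icc_subset_Icc (hmono 0 n (by omega) (by omega))
      (hmono (n + 1) N (by omega) le_rfl)
  have hTpos : 0 < Tmax := by
    rw [hT]
    have h0 : (0:ℕ) ∈ Finset.range N := Finset.mem_range.mpr (by omega)
    calc (0:ℝ) < t 1 - t 0 := sub_pos.mpr (ht 0 (by omega))
      _ ≤ _ := Finset.le_sup' (fun n => t (n + 1) - t n) h0
  -- gap bound
  have hgap : ∀ n < N, t (n + 1) - t n ≤ Tmax := by
    intro n hn
    rw [hT]
    exact Finset.le_sup' (fun n => t (n + 1) - t n) (Finset.mem_range.mpr hn)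
  -- the main estimate
  constructor
  · have step1 : ∀ n < N,
        (∫ x in (t n)..(t (n + 1)), (f x - f ((t n + t (n + 1)) / 2)) ^ 2)
          ≤ (Tmax / π) ^ 2 * ∫ x in (t n)..(t (n + 1)), f' x ^ 2 := by
      intro n hn
      have h1 := midpoint_wirtinger (t n) (t (n + 1)) (ht n hn) f f'
        (fun x hx => hderiv x (hsub n hn hx)) (hcont.mono (hsub n hn))
      refine h1.trans ?_
      apply mul_le_mul_of_nonneg_right _ (intervalIntegral.integral_nonneg (ht n hn).le
        (fun u _ => sq_nonneg _))
      apply pow_le_pow_left₀ (div_nonneg (sub_nonneg.mpr (ht n hn).le) hπ.le)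
      exact (div_le_div_iff_of_pos_right hπ).mpr (hgap n hn)
    have hint : ∀ k < N, IntervalIntegrable (fun x => f' x ^ 2) volume (t k) (t (k + 1)) := by
      intro k hk
      exact (((hcont.pow 2).mono (hsub k hk)).mono
        (by rw [uIcc_of_le (ht k hk).le])).intervalIntegrable
    have hsum : ∑ n ∈ Finset.range N, ∫ x in (t n)..(t (n + 1)), f' x ^ 2
        = ∫ x in (t 0)..(t N), f' x ^ 2 :=
      intervalIntegral.sum_integral_adjacent_intervals hint
    calc ∑ n ∈ Finset.range N,
          ∫ x in (t n)..(t (n + 1)), (f x - f ((t n + t (n + 1)) / 2)) ^ 2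
        ≤ ∑ n ∈ Finset.range N, (Tmax / π) ^ 2 * ∫ x in (t n)..(t (n + 1)), f' x ^ 2 :=
          Finset.sum_le_sum (fun n hn => step1 n (Finset.mem_range.mp hn))
      _ = (Tmax / π) ^ 2 * ∫ x in (t 0)..(t N), f' x ^ 2 := by
          rw [← Finset.mul_sum, hsum]
      _ ≤ (Tmax / π) ^ 2 * (Ω₀ ^ 2 * ∫ x in (t 0)..(t N), f x ^ 2) :=
          mul_le_mul_of_nonneg_left hBernstein (sq_nonneg _)
      _ = (Tmax * Ω₀ / π) ^ 2 * ∫ x in (t 0)..(t N), f x ^ 2 := by ring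
  · intro h
    have h1 : Tmax * Ω₀ < π := by
      have := (lt_div_iff₀ hΩ).mp h
      linarith
    have h2 : 0 ≤ Tmax * Ω₀ / π := div_nonneg (by positivity) hπ.le
    have h3 : Tmax * Ω₀ / π < 1 := (div_lt_one hπ).mpr h1
    exact pow_lt_one₀ h2 h3 (by omega)
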